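/- arXiv:2303.03744 — 4 statements merged into one kernel-verified Lean document; each statement's English description precedes it below -/
import Mathlib

section
/- Let p be an odd prime, γ ≥ 1, χ a primitive Dirichlet character modulo p^γ, and μ < ν ≤ γ/2 integers with μ ≥ 0. Let u, v, w be integers with gcd(w, p) = 1. Then the sum over all residues a₁ modulo p^ν of χ(u + v·w·a₁·p^{γ-ν}) equals χ(u)·p^ν if p^ν divides v, and equals 0 otherwise. -/
lemma aux_prim (p γ : ℕ) (hp : p.Prime) (hγ : 1 ≤ γ)
    (χ : DirichletCharacter ℂ (p ^ γ)) (hχ : χ.IsPrimitive) :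
    ∃ t : ℤ, χ (((1 + t * (p:ℤ) ^ (γ - 1) : ℤ) : ZMod (p ^ γ))) ≠ 1 := by
  haveI : NeZero (p ^ γ) := ⟨pow_ne_zero _ hp.ne_zero⟩
  haveI : NeZero (p ^ (γ - 1)) := ⟨pow_ne_zero _ hp.ne_zero⟩
  by_contra h
  push_neg at h
  have hd : p ^ (γ - 1) ∣ p ^ γ := pow_dvd_pow p (Nat.sub_le γ 1)
  have hft : χ.FactorsThrough (p ^ (γ - 1)) := by
    rw [DirichletCharacter.factorsThrough_iff_ker_unitsMap hd]
    intro x hx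
    have hx' : ZMod.castHom hd (ZMod (p ^ (γ - 1))) (x : ZMod (p ^ γ)) = 1 := by
      have := congrArg Units.val hx
      simpa [ZMod.unitsMap_def] using this
    set y : ZMod (p ^ γ) := (x : ZMod (p ^ γ)) with hy
    have h2 : (((y - 1).val : ℕ) : ZMod (p ^ (γ - 1))) = 0 := by
      rw [ZMod.natCast_val, ← ZMod.castHom_apply (h := hd), map_sub, map_one, hx', sub_self]
    obtain ⟨k, hk⟩ := (ZMod.natCast_eq_zero_iff _ _).mp h2
    have hy1 : y = (((1 + (k:ℤ) * (p:ℤ) ^ (γ - 1) : ℤ) : ZMod (p ^ γ))) := by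
      have : y - 1 = (((y - 1).val : ℕ) : ZMod (p ^ γ)) := by
        rw [ZMod.natCast_val, ZMod.cast_id]
      rw [hk] at this
      push_cast at this ⊢
      linear_combination this
    have : χ y = 1 := by rw [hy1]; exact h k
    ext
    rwa [MulChar.coe_toUnitHom, Units.val_one]
  have hle : χ.conductor ≤ p ^ (γ - 1) :=
    Nat.sInf_le ((DirichletCharacter.mem_conductorSet_iff _).mpr hft)
  rw [hχ] at hle
  exact absurd hle (not_le.mpr (Nat.pow_lt_pow_right hp.one_lt (by omega)))


lemma aux_key (p γ ν : ℕ) (hp : 1 < p) (hν : 2 * ν ≤ γ) (x y : ZMod (p ^ ν)) :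
    (((1 + ((x + y).val : ℤ) * (p:ℤ) ^ (γ - ν)) : ℤ) : ZMod (p ^ γ)) =
      (((1 + (x.val : ℤ) * (p:ℤ) ^ (γ - ν)) * (1 + (y.val : ℤ) * (p:ℤ) ^ (γ - ν)) : ℤ)
        : ZMod (p ^ γ)) := by
  haveI : NeZero (p ^ ν) := ⟨pow_ne_zero _ (by omega)⟩
  rw [← sub_eq_zero, ← Int.cast_sub, ZMod.intCast_zmod_eq_zero_iff_dvd]
  push_cast
  have hmod : (x + y).val ≡ x.val + y.val [MOD p ^ ν] := by
    rw [ZMod.val_add]; exact Nat.mod_modEq _ _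
  obtain ⟨k, hk⟩ : ((p:ℤ) ^ ν) ∣ ((x.val : ℤ) + (y.val : ℤ) - ((x + y).val : ℤ)) := by
    have := hmod.dvd
    push_cast at this ⊢
    exact this
  have h1 : (p:ℤ) ^ γ ∣ (((x + y).val : ℤ) - (x.val : ℤ) - (y.val : ℤ)) * (p:ℤ) ^ (γ - ν) := by
    refine ⟨-k, ?_⟩
    have hsum : ν + (γ - ν) = γ := by omega
    calc (((x + y).val : ℤ) - (x.val : ℤ) - (y.val : ℤ)) * (p:ℤ) ^ (γ - ν)
        = -(((x.val : ℤ) + (y.val : ℤ) - ((x + y).val : ℤ)) * (p:ℤ) ^ (γ - ν)) := by ring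
      _ = -((p:ℤ) ^ ν * (p:ℤ) ^ (γ - ν) * k) := by rw [hk]; ring
      _ = (p:ℤ) ^ (ν + (γ - ν)) * (-k) := by rw [pow_add]; ring
      _ = (p:ℤ) ^ γ * (-k) := by rw [hsum]
  have h2 : (p:ℤ) ^ γ ∣ (x.val : ℤ) * (y.val : ℤ) * ((p:ℤ) ^ (γ - ν) * (p:ℤ) ^ (γ - ν)) := by
    refine Dvd.dvd.mul_left ?_ _
    rw [← pow_add]
    exact pow_dvd_pow (p:ℤ) (by omega)
  have : (1 + ((x + y).val : ℤ) * (p:ℤ) ^ (γ - ν)) -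
      (1 + (x.val : ℤ) * (p:ℤ) ^ (γ - ν)) * (1 + (y.val : ℤ) * (p:ℤ) ^ (γ - ν)) =
      (((x + y).val : ℤ) - (x.val : ℤ) - (y.val : ℤ)) * (p:ℤ) ^ (γ - ν)
        - (x.val : ℤ) * (y.val : ℤ) * ((p:ℤ) ^ (γ - ν) * (p:ℤ) ^ (γ - ν)) := by ring
  rw [this]
  exact h1.sub h2

noncomputable def auxPsi (p γ ν : ℕ) (hp : 1 < p) (hν : 2 * ν ≤ γ) (χ : DirichletCharacter ℂ (p ^ γ)) :
    AddChar (ZMod (p ^ ν)) ℂ where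
  toFun x := χ (((1 + (x.val : ℤ) * (p:ℤ) ^ (γ - ν) : ℤ) : ZMod (p ^ γ)))
  map_zero_eq_one' := by
    haveI : NeZero (p ^ ν) := ⟨pow_ne_zero _ (by omega)⟩
    simp
  map_add_eq_mul' := by
    intro x y
    rw [aux_key p γ ν hp hν x y, Int.cast_mul, map_mul]

lemma auxPsi_apply (p γ ν : ℕ) (hp : 1 < p) (hν : 2 * ν ≤ γ)
    (χ : DirichletCharacter ℂ (p ^ γ)) (x : ZMod (p ^ ν)) :
    auxPsi p γ ν hp hν χ x = χ (((1 + (x.val : ℤ) * (p:ℤ) ^ (γ - ν) : ℤ) : ZMod (p ^ γ))) := rfl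

lemma aux_mul_pow (p γ ν : ℕ) (hν : ν ≤ γ) (a b : ℤ) (h : (p:ℤ) ^ ν ∣ a - b) :
    ((a * (p:ℤ) ^ (γ - ν) : ℤ) : ZMod (p ^ γ)) = ((b * (p:ℤ) ^ (γ - ν) : ℤ) : ZMod (p ^ γ)) := by
  rw [← sub_eq_zero, ← Int.cast_sub, ZMod.intCast_zmod_eq_zero_iff_dvd]
  push_cast
  obtain ⟨k, hk⟩ := h
  refine ⟨k, ?_⟩
  calc a * (p:ℤ) ^ (γ - ν) - b * (p:ℤ) ^ (γ - ν) = (a - b) * (p:ℤ) ^ (γ - ν) := by ring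
    _ = (p:ℤ) ^ ν * (p:ℤ) ^ (γ - ν) * k := by rw [hk]; ring
    _ = (p:ℤ) ^ (ν + (γ - ν)) * k := by rw [pow_add]
    _ = (p:ℤ) ^ γ * k := by congr 2; omega

lemma aux_nontriv (p γ ν : ℕ) (hp : p.Prime) (hν1 : 1 ≤ ν) (hν : 2 * ν ≤ γ)
    (χ : DirichletCharacter ℂ (p ^ γ)) (hχ : χ.IsPrimitive)
    (c : ZMod (p ^ ν)) (hc : c ≠ 0) :
    AddChar.mulShift (auxPsi p γ ν hp.one_lt hν χ) c ≠ 0 := by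
  haveI : Fact p.Prime := ⟨hp⟩
  haveI : NeZero (p ^ ν) := ⟨pow_ne_zero _ hp.ne_zero⟩
  obtain ⟨t, ht⟩ := aux_prim p γ hp (by omega) χ hχ
  set j := padicValNat p c.val with hj
  have hval : c.val ≠ 0 := (ZMod.val_ne_zero c).mpr hc
  obtain ⟨c', hc'⟩ : p ^ j ∣ c.val := pow_padicValNat_dvd
  have hpc' : ¬ p ∣ c' := by
    intro hdvd
    obtain ⟨d, hd⟩ := hdvd
    have hdd : c.val = p ^ (j + 1) * d := by rw [hc', hd, pow_succ]; ring
    exact pow_succ_padicValNat_not_dvd (p := p) hval ⟨d, hdd⟩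
  have hjν : j < ν := by
    have h1 : p ^ j ≤ c.val := Nat.le_of_dvd (Nat.pos_of_ne_zero hval) ⟨c', hc'⟩
    have h2 : c.val < p ^ ν := ZMod.val_lt c
    exact (Nat.pow_lt_pow_iff_right hp.one_lt).mp (lt_of_le_of_lt h1 h2)
  have hcop : Nat.Coprime c' (p ^ ν) :=
    Nat.Coprime.pow_right _ (((Nat.Prime.coprime_iff_not_dvd hp).mpr hpc').symm)
  obtain ⟨e, he⟩ := (ZMod.isUnit_iff_coprime c' (p ^ ν)).mpr hcop
  set x : ZMod (p ^ ν) := ↑e⁻¹ * (t : ZMod (p ^ ν)) * (p : ZMod (p ^ ν)) ^ (ν - 1 - j) with hx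
  have hc_eq : ((p : ZMod (p ^ ν)) ^ j * (c' : ZMod (p ^ ν))) = c := by
    have := congrArg (Nat.cast : ℕ → ZMod (p ^ ν)) hc'
    rw [ZMod.natCast_val, ZMod.cast_id] at this
    push_cast at this
    exact this.symm
  have hcx : c * x = (t : ZMod (p ^ ν)) * (p : ZMod (p ^ ν)) ^ (ν - 1) := by
    rw [← hc_eq, hx]
    have h1 : (p : ZMod (p ^ ν)) ^ j * (p : ZMod (p ^ ν)) ^ (ν - 1 - j)
        = (p : ZMod (p ^ ν)) ^ (ν - 1) := by
      rw [← pow_add]; congr 1; omega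
    have h2 : (c' : ZMod (p ^ ν)) * ↑e⁻¹ = 1 := by rw [← he]; exact e.mul_inv
    calc (p : ZMod (p ^ ν)) ^ j * (c' : ZMod (p ^ ν))
          * (↑e⁻¹ * (t : ZMod (p ^ ν)) * (p : ZMod (p ^ ν)) ^ (ν - 1 - j))
        = ((c' : ZMod (p ^ ν)) * ↑e⁻¹) * ((t : ZMod (p ^ ν))
            * ((p : ZMod (p ^ ν)) ^ j * (p : ZMod (p ^ ν)) ^ (ν - 1 - j))) := by ring
      _ = (t : ZMod (p ^ ν)) * (p : ZMod (p ^ ν)) ^ (ν - 1) := by rw [h1, h2, one_mul]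
  intro hzero
  apply ht
  have happ := DFunLike.congr_fun hzero x
  rw [AddChar.mulShift_apply, AddChar.zero_apply, hcx] at happ
  rw [auxPsi_apply] at happ
  set z : ZMod (p ^ ν) := (t : ZMod (p ^ ν)) * (p : ZMod (p ^ ν)) ^ (ν - 1) with hz
  have hdvd : (p:ℤ) ^ ν ∣ ((z.val : ℤ) - t * (p:ℤ) ^ (ν - 1)) := by
    have h0 : (((z.val : ℤ) - t * (p:ℤ) ^ (ν - 1) : ℤ) : ZMod (p ^ ν)) = 0 := by
      push_cast
      rw [ZMod.natCast_val, ZMod.cast_id, hz]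
      ring
    have := (ZMod.intCast_zmod_eq_zero_iff_dvd _ _).mp h0
    exact_mod_cast this
  have hkey : (((1 + (z.val : ℤ) * (p:ℤ) ^ (γ - ν)) : ℤ) : ZMod (p ^ γ))
      = (((1 + t * (p:ℤ) ^ (γ - 1)) : ℤ) : ZMod (p ^ γ)) := by
    have := aux_mul_pow p γ ν (by omega) (z.val : ℤ) (t * (p:ℤ) ^ (ν - 1)) hdvd
    have hpow : t * (p:ℤ) ^ (ν - 1) * (p:ℤ) ^ (γ - ν) = t * (p:ℤ) ^ (γ - 1) := by
      rw [mul_assoc, ← pow_add]; congr 2; omega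
    rw [hpow] at this
    push_cast at this ⊢
    rw [this]
  rw [hkey] at happ
  exact happ

theorem stmt1 (p γ μ ν : ℕ) (hp : p.Prime) (hodd : Odd p) (hγ : 1 ≤ γ)
    (χ : DirichletCharacter ℂ (p ^ γ)) (hχ : χ.IsPrimitive)
    (hμν : μ < ν) (hν : 2 * ν ≤ γ)
    (u v w : ℤ) (hw : IsCoprime w (p : ℤ)) :
    ∑ a ∈ Finset.range (p ^ ν),
        χ (((u + v * w * (a : ℤ) * (p : ℤ) ^ (γ - ν)) : ℤ) : ZMod (p ^ γ))
      = if (p : ℤ) ^ ν ∣ v then χ ((u : ZMod (p ^ γ))) * (p : ℂ) ^ ν else 0 := by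
  classical
  haveI : Fact p.Prime := ⟨hp⟩
  haveI : NeZero (p ^ γ) := ⟨pow_ne_zero _ hp.ne_zero⟩
  haveI : NeZero (p ^ ν) := ⟨pow_ne_zero _ hp.ne_zero⟩
  have hν1 : 1 ≤ ν := by omega
  have hγν : ν < γ := by omega
  by_cases hpu : (p : ℤ) ∣ u
  · -- p divides u : every term vanishes, and so does the RHS
    have hz : ∀ x : ℤ, (p : ℤ) ∣ x → χ ((x : ZMod (p ^ γ))) = 0 := by
      intro x hx
      apply χ.map_nonunit
      intro hunit
      obtain ⟨y, hy⟩ := hx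
      rw [hy] at hunit
      push_cast at hunit
      have h1 : IsUnit ((p : ZMod (p ^ γ))) := isUnit_of_mul_isUnit_left hunit
      have h2 : IsUnit (((p : ℕ) : ZMod (p ^ γ))) := by exact_mod_cast h1
      rw [ZMod.isUnit_iff_coprime] at h2
      have h3 : p ∣ p ^ γ := dvd_pow_self p (by omega)
      have := Nat.Coprime.eq_one_of_dvd h2 h3
      have := hp.two_le
      omega
    rw [Finset.sum_eq_zero]
    · rw [hz u hpu]
      split_ifs <;> simp
    · intro a _
      apply hz
      exact dvd_add hpu ((dvd_pow_self (p:ℤ) (by omega : γ - ν ≠ 0)).mul_left _)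
  · -- u is coprime to p
    have hu : IsCoprime u ((p : ℤ) ^ γ) := by
      have : IsCoprime u (p : ℤ) := by
        rw [Int.isCoprime_iff_gcd_eq_one]
        have hnd : ¬ p ∣ u.natAbs := fun h => hpu (Int.natCast_dvd.mpr h)
        have := (Nat.Prime.coprime_iff_not_dvd hp).mpr hnd
        simpa [Int.gcd, Nat.coprime_comm] using this.symm
      exact this.pow_right
    obtain ⟨u', b, hub⟩ := hu
    set m := γ - ν with hm
    set ψ := auxPsi p γ ν hp.one_lt hν χ with hψ
    set cc : ZMod (p ^ ν) := ((u' * v * w : ℤ) : ZMod (p ^ ν)) with hcc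
    have hterm : ∀ a : ℕ,
        χ (((u + v * w * (a : ℤ) * (p : ℤ) ^ m) : ℤ) : ZMod (p ^ γ))
          = χ ((u : ZMod (p ^ γ))) * ψ (cc * (a : ZMod (p ^ ν))) := by
      intro a
      rw [hψ, auxPsi_apply]
      have hdvd : (p:ℤ) ^ ν ∣ (((cc * (a : ZMod (p ^ ν))).val : ℤ) - u' * v * w * a) := by
        have h0 : ((((cc * (a : ZMod (p ^ ν))).val : ℤ) - u' * v * w * a : ℤ)
            : ZMod (p ^ ν)) = 0 := by
          push_cast
          rw [ZMod.natCast_val, ZMod.cast_id, hcc]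
          push_cast
          ring
        have := (ZMod.intCast_zmod_eq_zero_iff_dvd _ _).mp h0
        exact_mod_cast this
      have e1 := aux_mul_pow p γ ν (by omega) _ _ hdvd
      have e2 : (((1 + ((cc * (a : ZMod (p ^ ν))).val : ℤ) * (p:ℤ) ^ m) : ℤ) : ZMod (p ^ γ))
          = (((1 + u' * v * w * a * (p:ℤ) ^ m) : ℤ) : ZMod (p ^ γ)) := by
        push_cast at e1 ⊢
        rw [e1]
      rw [e2, ← map_mul, ← Int.cast_mul]
      congr 1
      rw [← sub_eq_zero, ← Int.cast_sub, ZMod.intCast_zmod_eq_zero_iff_dvd]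
      refine ⟨b * (v * w * (a:ℤ) * (p:ℤ) ^ m), ?_⟩
      push_cast
      linear_combination (-(v * w * (a:ℤ) * (p:ℤ) ^ m)) * hub
    have hre : ∑ a ∈ Finset.range (p ^ ν), ψ (cc * ((a : ℕ) : ZMod (p ^ ν)))
        = ∑ x : ZMod (p ^ ν), ψ (cc * x) := by
      apply Finset.sum_bij' (i := fun (a : ℕ) (_ : a ∈ Finset.range (p ^ ν)) => ((a : ℕ) : ZMod (p ^ ν)))
        (j := fun (x : ZMod (p ^ ν)) (_ : x ∈ Finset.univ) => x.val)
      · intro a ha; exact Finset.mem_univ _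
      · intro x _; exact Finset.mem_range.mpr (ZMod.val_lt x)
      · intro a ha
        exact ZMod.val_natCast_of_lt (Finset.mem_range.mp ha)
      · intro x _
        rw [ZMod.natCast_val, ZMod.cast_id]
      · intro a _; rfl
    have hms : AddChar.mulShift ψ cc = 0 ↔ (p : ℤ) ^ ν ∣ v := by
      have hccz : cc = 0 ↔ (p : ℤ) ^ ν ∣ v := by
        rw [hcc, ZMod.intCast_zmod_eq_zero_iff_dvd]
        push_cast
        constructor
        · intro h
          have hu' : IsCoprime u' ((p:ℤ)) := by
            have : IsCoprime u' ((p:ℤ) ^ γ) := ⟨u, b, by linear_combination hub⟩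
            exact (IsCoprime.pow_right_iff (by omega)).mp this
          have hcop2 : IsCoprime ((p:ℤ) ^ ν) (u' * w) :=
            ((hu'.symm.mul_right hw.symm)).pow_left
          have h' : (p:ℤ) ^ ν ∣ (u' * w) * v := by
            have : u' * v * w = (u' * w) * v := by ring
            rwa [this] at h
          exact hcop2.dvd_of_dvd_mul_left h'
        · intro h
          exact (h.mul_left u').mul_right w
      constructor
      · intro h
        by_contra hv
        exact aux_nontriv p γ ν hp hν1 hν χ hχ cc (fun hc0 => hv (hccz.mp hc0)) h
      · intro h
        rw [hccz.mpr h, AddChar.mulShift_zero]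
        rfl
    calc ∑ a ∈ Finset.range (p ^ ν),
          χ (((u + v * w * (a : ℤ) * (p : ℤ) ^ (γ - ν)) : ℤ) : ZMod (p ^ γ))
        = ∑ a ∈ Finset.range (p ^ ν), χ ((u : ZMod (p ^ γ))) * ψ (cc * (a : ZMod (p ^ ν))) :=
          Finset.sum_congr rfl (fun a _ => hterm a)
      _ = χ ((u : ZMod (p ^ γ))) * ∑ a ∈ Finset.range (p ^ ν), ψ (cc * (a : ZMod (p ^ ν))) := by
          rw [Finset.mul_sum]
      _ = χ ((u : ZMod (p ^ γ))) * ∑ x : ZMod (p ^ ν), (AddChar.mulShift ψ cc) x := by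
          rw [hre]; simp only [AddChar.mulShift_apply]
      _ = χ ((u : ZMod (p ^ γ))) *
            (if AddChar.mulShift ψ cc = 0 then ((Fintype.card (ZMod (p ^ ν)) : ℂ)) else 0) := by
          rw [AddChar.sum_eq_ite]
      _ = if (p : ℤ) ^ ν ∣ v then χ ((u : ZMod (p ^ γ))) * (p : ℂ) ^ ν else 0 := by
          by_cases hv : (p : ℤ) ^ ν ∣ v
          · rw [if_pos hv, if_pos (hms.mpr hv), ZMod.card]
            push_cast
            ring
          · rw [if_neg hv, if_neg (fun h => hv (hms.mp h)), mul_zero]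
end

section
/- Let p be an odd prime, γ ≥ 1, and χ a primitive Dirichlet character modulo p^γ. Let α = 2ν with 1 ≤ ν ≤ γ/3, and let r₁, r₂ be integers coprime to p. Define E(0) = Σ*_{a mod p^{2ν}} \bar{χ}(r₁ + a·p^{γ−2ν})·χ(r₂ + a·p^{γ−2ν}), the sum over a coprime to p. Then E(0) = 0 unless r₁ ≡ r₂ (mod p^{2ν−1}); if r₁ ≡ r₂ (mod p^{2ν}) then E(0) = χ(\bar{r₁}r₂)·p^{2ν−1}(p−1); and if r₁ ≡ r₂ (mod p^{2ν−1}) but r₁ ≢ r₂ (mod p^{2ν}) then E(0) = −χ(\bar{r₁}r₂)·p^{2ν−1}. -/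
open Finset

namespace Stmt5Aux

/-- The "additive character" attached to `χ` at level `p^(γ-1)`. -/
noncomputable def psi (p γ : ℕ) (χ : DirichletCharacter ℂ (p ^ γ)) (z : ZMod (p ^ γ)) : ℂ :=
  χ (1 + z * (p : ZMod (p ^ γ)) ^ (γ - 1))

variable {p γ : ℕ}

lemma pow_cast_eq_zero (p γ : ℕ) {s : ℕ} (hs : γ ≤ s) : ((p : ZMod (p ^ γ))) ^ s = 0 := by
  have h : ((p ^ s : ℕ) : ZMod (p ^ γ)) = 0 := by
    rw [ZMod.natCast_eq_zero_iff]
    exact pow_dvd_pow p hs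
  push_cast at h
  exact h

lemma psi_add (χ : DirichletCharacter ℂ (p ^ γ)) (hγ : 2 ≤ γ) (z w : ZMod (p ^ γ)) :
    psi p γ χ (z + w) = psi p γ χ z * psi p γ χ w := by
  unfold psi
  rw [← map_mul]
  congr 1
  have h2 : ((p : ZMod (p ^ γ))) ^ (γ - 1) * ((p : ZMod (p ^ γ))) ^ (γ - 1) = 0 := by
    rw [← pow_add]
    exact pow_cast_eq_zero p γ (by omega)
  have expand : (1 + z * (p : ZMod (p ^ γ)) ^ (γ - 1)) * (1 + w * (p : ZMod (p ^ γ)) ^ (γ - 1))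
      = 1 + (z + w) * (p : ZMod (p ^ γ)) ^ (γ - 1)
        + z * w * ((p : ZMod (p ^ γ)) ^ (γ - 1) * (p : ZMod (p ^ γ)) ^ (γ - 1)) := by ring
  rw [expand, h2, mul_zero, add_zero]

lemma psi_mul_p (χ : DirichletCharacter ℂ (p ^ γ)) (hγ : 1 ≤ γ) (z : ZMod (p ^ γ)) :
    psi p γ χ ((p : ZMod (p ^ γ)) * z) = 1 := by
  unfold psi
  have h : (p : ZMod (p ^ γ)) * z * ((p : ZMod (p ^ γ))) ^ (γ - 1) = 0 := by
    have h2 : ((p : ZMod (p ^ γ))) * ((p : ZMod (p ^ γ))) ^ (γ - 1) = 0 := by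
      rw [← pow_succ']
      exact pow_cast_eq_zero p γ (by omega)
    linear_combination z * h2
  rw [h, add_zero, map_one]

lemma psi_zero (χ : DirichletCharacter ℂ (p ^ γ)) : psi p γ χ 0 = 1 := by
  unfold psi
  rw [zero_mul, add_zero, map_one]

lemma psi_natmul (χ : DirichletCharacter ℂ (p ^ γ)) (hγ : 2 ≤ γ) (t : ℕ) (z : ZMod (p ^ γ)) :
    psi p γ χ ((t : ZMod (p ^ γ)) * z) = psi p γ χ z ^ t := by
  induction t with
  | zero => simpa using psi_zero χ
  | succ n ih =>
      push_cast
      rw [add_mul, one_mul, psi_add χ hγ, ih, pow_succ]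

lemma psi_congr (χ : DirichletCharacter ℂ (p ^ γ)) (hγ : 2 ≤ γ) {z w : ZMod (p ^ γ)}
    (h : ∃ u, z = w + (p : ZMod (p ^ γ)) * u) : psi p γ χ z = psi p γ χ w := by
  obtain ⟨u, rfl⟩ := h
  rw [psi_add χ hγ, psi_mul_p χ (by omega), mul_one]

lemma psi_nontrivial (hp : p.Prime) (hγ : 1 ≤ γ) (χ : DirichletCharacter ℂ (p ^ γ))
    (hχ : χ.IsPrimitive) : ∃ z, psi p γ χ z ≠ 1 := by
  by_contra hcon
  push_neg at hcon
  haveI : NeZero (p ^ γ) := ⟨pow_ne_zero _ hp.ne_zero⟩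
  have hdvd : p ^ (γ - 1) ∣ p ^ γ := pow_dvd_pow p (by omega)
  have hft : χ.FactorsThrough (p ^ (γ - 1)) := by
    rw [DirichletCharacter.factorsThrough_iff_ker_unitsMap hdvd]
    intro u hu
    rw [MonoidHom.mem_ker] at hu ⊢
    -- `(u : ZMod (p^γ))` is `1` mod `p^(γ-1)`
    have h1 : (((u : ZMod (p ^ γ)).cast : ℤ) : ZMod (p ^ (γ - 1))) = ((1 : ℤ) : ZMod (p ^ (γ - 1))) := by
      have := congrArg (Units.val) hu
      rw [ZMod.unitsMap_def] at this
      simp only [Units.coe_map, MonoidHom.coe_coe, Units.val_one] at this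
      rw [ZMod.intCast_cast]
      rw [ZMod.castHom_apply] at this
      simpa using this
    rw [ZMod.intCast_eq_intCast_iff] at h1
    obtain ⟨c, hc⟩ := h1.symm.dvd
    have h4 : ((u : ZMod (p ^ γ)) : ZMod (p ^ γ)) = 1 + (c : ZMod (p ^ γ)) * (p : ZMod (p ^ γ)) ^ (γ - 1) := by
      have h5 : (((u : ZMod (p ^ γ)).cast : ℤ) : ZMod (p ^ γ)) = (u : ZMod (p ^ γ)) :=
        ZMod.intCast_zmod_cast _
      rw [← h5]
      have h6 : ((u : ZMod (p ^ γ)).cast : ℤ) = 1 + ((p ^ (γ - 1) : ℕ) : ℤ) * c := by linarith [hc]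
      rw [h6]
      push_cast
      ring
    have := hcon (c : ZMod (p ^ γ))
    unfold psi at this
    rw [← h4] at this
    ext
    rw [MulChar.coe_toUnitHom]
    simpa using this
  have hle : χ.conductor ≤ p ^ (γ - 1) := Nat.sInf_le hft
  rw [DirichletCharacter.IsPrimitive] at hχ
  rw [hχ] at hle
  have : p ^ (γ - 1) < p ^ γ := Nat.pow_lt_pow_right hp.one_lt (by omega)
  omega

lemma psi_unit_ne_one (hp : p.Prime) (hγ : 2 ≤ γ) (χ : DirichletCharacter ℂ (p ^ γ))
    (hχ : χ.IsPrimitive) {c : ZMod (p ^ γ)} (hc : IsUnit c) : psi p γ χ c ≠ 1 := by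
  intro h1
  obtain ⟨z, hz⟩ := psi_nontrivial hp (by omega) χ hχ
  apply hz
  haveI : NeZero (p ^ γ) := ⟨pow_ne_zero _ hp.ne_zero⟩
  have hzw : z = ((c⁻¹ * z).val : ZMod (p ^ γ)) * c := by
    rw [ZMod.natCast_val, ZMod.cast_id]
    rw [mul_comm c⁻¹ z, mul_assoc, ZMod.inv_mul_of_unit c hc, mul_one]
  rw [hzw, psi_natmul χ hγ, h1, one_pow]

lemma psi_geom_sum (hp : p.Prime) (hγ : 2 ≤ γ) (χ : DirichletCharacter ℂ (p ^ γ))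
    (hχ : χ.IsPrimitive) {c : ZMod (p ^ γ)} (hc : IsUnit c) {s : ℕ} (hs : 1 ≤ s) :
    ∑ t ∈ range (p ^ s), psi p γ χ ((t : ZMod (p ^ γ)) * c) = 0 := by
  have hne : psi p γ χ c ≠ 1 := psi_unit_ne_one hp hγ χ hχ hc
  have hsum : ∑ t ∈ range (p ^ s), psi p γ χ ((t : ZMod (p ^ γ)) * c)
      = ∑ t ∈ range (p ^ s), psi p γ χ c ^ t := by
    refine Finset.sum_congr rfl fun t _ => ?_
    exact psi_natmul χ hγ t c
  rw [hsum, geom_sum_eq hne]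
  have hpow : psi p γ χ c ^ (p ^ s) = 1 := by
    rw [← psi_natmul χ hγ]
    have : ((p ^ s : ℕ) : ZMod (p ^ γ)) * c = (p : ZMod (p ^ γ)) * (((p ^ (s - 1) : ℕ) : ZMod (p ^ γ)) * c) := by
      push_cast
      rw [← mul_assoc, ← pow_succ']
      congr 2
      omega
    rw [this, psi_mul_p χ (by omega)]
  rw [hpow, sub_self, zero_div]

lemma filter_range_p (hp : p.Prime) :
    (range p).filter (fun b => ¬ p ∣ b) = (range p).erase 0 := by
  ext b
  simp only [mem_filter, mem_erase, mem_range]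
  constructor
  · rintro ⟨hb, hnd⟩
    exact ⟨fun h => hnd (h ▸ dvd_zero p), hb⟩
  · rintro ⟨hb0, hb⟩
    refine ⟨hb, fun h => hb0 ?_⟩
    exact Nat.eq_zero_of_dvd_of_lt h hb

lemma psi_erase_sum (hp : p.Prime) (hγ : 2 ≤ γ) (χ : DirichletCharacter ℂ (p ^ γ))
    (hχ : χ.IsPrimitive) {c : ZMod (p ^ γ)} (hc : IsUnit c) :
    ∑ b ∈ (range p).filter (fun b => ¬ p ∣ b), psi p γ χ ((b : ZMod (p ^ γ)) * c) = -1 := by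
  rw [filter_range_p hp]
  have h0 : (0 : ℕ) ∈ range p := by
    simp [hp.pos]
  have hkey : (∑ b ∈ (range p).erase 0, psi p γ χ ((b : ZMod (p ^ γ)) * c))
      + psi p γ χ (((0 : ℕ) : ZMod (p ^ γ)) * c)
      = ∑ b ∈ range p, psi p γ χ ((b : ZMod (p ^ γ)) * c) := by
    simpa using Finset.sum_erase_add (range p) (fun b => psi p γ χ ((b : ZMod (p ^ γ)) * c)) h0
  have hfull : ∑ b ∈ range p, psi p γ χ ((b : ZMod (p ^ γ)) * c) = 0 := by
    have := psi_geom_sum hp hγ χ hχ hc (s := 1) le_rfl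
    simpa using this
  have h00 : psi p γ χ (((0 : ℕ) : ZMod (p ^ γ)) * c) = 1 := by
    simp [psi_zero]
  linear_combination hkey + hfull - h00
  
lemma reindex (hp : p.Prime) {j l : ℕ} (hj : 1 ≤ j) (G : ℕ → ℂ) :
    ∑ a ∈ (range (p ^ (j + l))).filter (fun a => ¬ p ∣ a), G a
      = ∑ b ∈ (range (p ^ j)).filter (fun b => ¬ p ∣ b), ∑ t ∈ range (p ^ l), G (b + p ^ j * t) := by
  rw [← Finset.sum_product']
  refine Finset.sum_nbij' (fun a => (a % p ^ j, a / p ^ j)) (fun x => x.1 + p ^ j * x.2) ?_ ?_ ?_ ?_ ?_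
  · intro a ha
    simp only [mem_filter, mem_range] at ha
    obtain ⟨hlt, hnd⟩ := ha
    have hpj : 0 < p ^ j := pow_pos hp.pos j
    simp only [mem_product, mem_filter, mem_range]
    refine ⟨⟨Nat.mod_lt _ hpj, fun h => hnd ?_⟩, ?_⟩
    · have : a = a % p ^ j + p ^ j * (a / p ^ j) := (Nat.mod_add_div a (p ^ j)).symm
      rw [this]
      exact dvd_add h (Dvd.dvd.mul_right (dvd_pow_self p (by omega)) _)
    · rw [Nat.div_lt_iff_lt_mul hpj]
      rw [pow_add] at hlt
      exact hlt.trans_eq (mul_comm _ _)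
  · intro x hx
    simp only [mem_product, mem_filter, mem_range] at hx
    obtain ⟨⟨hb, hnd⟩, ht⟩ := hx
    simp only [mem_filter, mem_range]
    constructor
    · rw [pow_add]
      have hpj : 0 < p ^ j := pow_pos hp.pos j
      calc x.1 + p ^ j * x.2 < p ^ j + p ^ j * x.2 := by omega
        _ = p ^ j * (x.2 + 1) := by ring
        _ ≤ p ^ j * p ^ l := Nat.mul_le_mul_left _ (by omega)
    · intro h
      have hmul : p ∣ p ^ j * x.2 := Dvd.dvd.mul_right (dvd_pow_self p (by omega)) _
      have h2 := Nat.dvd_sub h hmul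
      exact hnd (by simpa using h2)
  · intro a _
    exact Nat.mod_add_div a (p ^ j)
  · intro x hx
    simp only [mem_product, mem_filter, mem_range] at hx
    obtain ⟨⟨hb, _⟩, _⟩ := hx
    simp [Nat.add_mul_mod_self_left, Nat.mod_eq_of_lt hb, Nat.add_mul_div_left _ _ (pow_pos hp.pos j), Nat.div_eq_of_lt hb]
  · intro a _
    rw [Nat.mod_add_div a (p ^ j)]

lemma isUnit_intCast (hp : p.Prime) {r : ℤ} (hr : IsCoprime r (p : ℤ)) :
    IsUnit ((r : ZMod (p ^ γ))) := by
  obtain ⟨a, b, hab⟩ := hr.pow_right (n := γ)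
  have h := congrArg (fun z : ℤ => ((z : ZMod (p ^ γ)))) hab
  simp only [Int.cast_add, Int.cast_mul, Int.cast_one, Int.cast_pow] at h
  have hz : (((p : ℤ) : ZMod (p ^ γ))) ^ γ = 0 := by
    push_cast
    exact pow_cast_eq_zero p γ le_rfl
  rw [hz, mul_zero, add_zero] at h
  exact IsUnit.of_mul_eq_one _ (by rw [mul_comm]; exact h)

lemma conj_mul_self (χ : DirichletCharacter ℂ (p ^ γ)) {x : ZMod (p ^ γ)} (hx : IsUnit x) :
    (starRingEnd ℂ) (χ x) * χ x = 1 := by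
  calc (starRingEnd ℂ) (χ x) * χ x = χ⁻¹ x * χ x := by
        rw [starRingEnd_apply, MulChar.star_apply' χ x]
    _ = (χ⁻¹ * χ) x := by rw [MulChar.coeToFun_mul, Pi.mul_apply]
    _ = (1 : MulChar _ _) x := by rw [MulChar.inv_mul]
    _ = 1 := MulChar.one_apply hx

lemma chi_ne_zero (χ : DirichletCharacter ℂ (p ^ γ)) {x : ZMod (p ^ γ)} (hx : IsUnit x) :
    χ x ≠ 0 := by
  intro h
  have := conj_mul_self χ hx
  rw [h, mul_zero] at this
  norm_num at this

lemma intCast_eq_of_dvd {X Y : ℤ} (h : ((p : ℤ)) ^ γ ∣ X - Y) :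
    ((X : ZMod (p ^ γ))) = (Y : ZMod (p ^ γ)) := by
  have h2 : ((X - Y : ℤ) : ZMod (p ^ γ)) = 0 := by
    rw [ZMod.intCast_zmod_eq_zero_iff_dvd]
    push_cast
    exact h
  push_cast at h2
  linear_combination h2

end Stmt5Aux

theorem stmt5 (p γ ν : ℕ) (hp : p.Prime) (hodd : Odd p) (hγ : 1 ≤ γ)
    (χ : DirichletCharacter ℂ (p ^ γ)) (hχ : χ.IsPrimitive)
    (hν1 : 1 ≤ ν) (hν2 : 3 * ν ≤ γ)
    (r₁ r₂ : ℤ) (hr₁ : IsCoprime r₁ (p : ℤ)) (hr₂ : IsCoprime r₂ (p : ℤ))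
    (E : ℂ)
    (hE : E = ∑ a ∈ (Finset.range (p ^ (2 * ν))).filter (fun a => ¬ p ∣ a),
        (starRingEnd ℂ) (χ (((r₁ + (a : ℤ) * (p : ℤ) ^ (γ - 2 * ν)) : ℤ) : ZMod (p ^ γ)))
          * χ (((r₂ + (a : ℤ) * (p : ℤ) ^ (γ - 2 * ν)) : ℤ) : ZMod (p ^ γ))) :
    (¬ (p : ℤ) ^ (2 * ν - 1) ∣ (r₁ - r₂) → E = 0)
    ∧ ((p : ℤ) ^ (2 * ν) ∣ (r₁ - r₂) →
        E = χ (((r₁ : ZMod (p ^ γ)))⁻¹ * (r₂ : ZMod (p ^ γ)))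
              * ((p : ℂ) ^ (2 * ν - 1) * ((p : ℂ) - 1)))
    ∧ ((p : ℤ) ^ (2 * ν - 1) ∣ (r₁ - r₂) → ¬ (p : ℤ) ^ (2 * ν) ∣ (r₁ - r₂) →
        E = -(χ (((r₁ : ZMod (p ^ γ)))⁻¹ * (r₂ : ZMod (p ^ γ)))
              * (p : ℂ) ^ (2 * ν - 1))) := by
  classical
  have hγ3 : 3 ≤ γ := le_trans (by omega) hν2
  have hq1 : 1 ≤ γ - 2 * ν := by omega
  have hUnit : ∀ (r : ℤ), IsCoprime r (p : ℤ) → ∀ a : ℕ,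
      IsUnit (((r + (a : ℤ) * (p : ℤ) ^ (γ - 2 * ν)) : ℤ) : ZMod (p ^ γ)) := by
    intro r hr a
    apply Stmt5Aux.isUnit_intCast hp
    have hrw : r + (a : ℤ) * (p : ℤ) ^ (γ - 2 * ν)
        = r + (p : ℤ) * ((a : ℤ) * (p : ℤ) ^ (γ - 2 * ν - 1)) := by
      conv_lhs => rw [show (γ - 2 * ν) = (γ - 2 * ν - 1) + 1 from by omega]
      rw [pow_succ]
      ring
    rw [hrw]
    exact hr.add_mul_left_left _
  have hr₁u : IsUnit ((r₁ : ZMod (p ^ γ))) := Stmt5Aux.isUnit_intCast hp hr₁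
  have hr₂u : IsUnit ((r₂ : ZMod (p ^ γ))) := Stmt5Aux.isUnit_intCast hp hr₂
  set T : ℂ := χ (((r₁ : ZMod (p ^ γ)))⁻¹ * (r₂ : ZMod (p ^ γ))) with hTdef
  have hT : χ ((r₁ : ZMod (p ^ γ))) * T = χ ((r₂ : ZMod (p ^ γ))) := by
    rw [hTdef, ← map_mul]
    congr 1
    rw [← mul_assoc, ZMod.mul_inv_of_unit _ hr₁u, one_mul]
  have hχr₁ : χ ((r₁ : ZMod (p ^ γ))) ≠ 0 := Stmt5Aux.chi_ne_zero χ hr₁u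
  have hexp : p ^ (1 + (2 * ν - 1)) = p ^ (2 * ν) := by congr 1; omega
  refine ⟨?_, ?_, ?_⟩
  · -- case ¬ p^(2ν-1) ∣ r₁ - r₂ : E = 0
    intro hndvd
    have hpZ : Prime ((p : ℤ)) := Nat.prime_iff_prime_int.mp hp
    have hW : ∃ i : ℕ, ¬ (p : ℤ) ^ (i + 1) ∣ (r₁ - r₂) := by
      refine ⟨2 * ν - 2, ?_⟩
      have h : 2 * ν - 2 + 1 = 2 * ν - 1 := by omega
      rw [h]
      exact hndvd
    set k := Nat.find hW with hkdef
    have hk : ¬ (p : ℤ) ^ (k + 1) ∣ (r₁ - r₂) := Nat.find_spec hW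
    have hkle : k ≤ 2 * ν - 2 := by
      apply Nat.find_min' hW
      have h : 2 * ν - 2 + 1 = 2 * ν - 1 := by omega
      rw [h]
      exact hndvd
    have hpk : (p : ℤ) ^ k ∣ (r₁ - r₂) := by
      rcases Nat.eq_zero_or_pos k with h0 | hpos
      · rw [h0, pow_zero]; exact one_dvd _
      · have h := Nat.find_min hW (show k - 1 < k by omega)
        rw [not_not] at h
        have h2 : k - 1 + 1 = k := by omega
        rwa [h2] at h
    obtain ⟨d, hd⟩ := hpk
    have hpd : ¬ (p : ℤ) ∣ d := by
      rintro ⟨c, hc⟩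
      apply hk
      refine ⟨c, ?_⟩
      rw [hd, hc, pow_succ]
      ring
    have hdu : IsUnit ((d : ZMod (p ^ γ))) :=
      Stmt5Aux.isUnit_intCast hp ((hpZ.coprime_iff_not_dvd.mpr hpd).symm)
    have hexp2 : p ^ ((2 * ν - 1 - k) + (k + 1)) = p ^ (2 * ν) := by congr 1; omega
    rw [hE, ← hexp2, Stmt5Aux.reindex hp (by omega)]
    apply Finset.sum_eq_zero
    intro b _
    have hXYu : IsUnit ((((r₁ + (b : ℤ) * (p : ℤ) ^ (γ - 2 * ν)) : ℤ) : ZMod (p ^ γ))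
        * (((r₂ + (b : ℤ) * (p : ℤ) ^ (γ - 2 * ν)) : ℤ) : ZMod (p ^ γ))) :=
      (hUnit r₁ hr₁ b).mul (hUnit r₂ hr₂ b)
    have hXYinv : ((((r₁ + (b : ℤ) * (p : ℤ) ^ (γ - 2 * ν)) : ℤ) : ZMod (p ^ γ))
          * (((r₂ + (b : ℤ) * (p : ℤ) ^ (γ - 2 * ν)) : ℤ) : ZMod (p ^ γ)))
        * (((((r₁ + (b : ℤ) * (p : ℤ) ^ (γ - 2 * ν)) : ℤ) : ZMod (p ^ γ))
          * (((r₂ + (b : ℤ) * (p : ℤ) ^ (γ - 2 * ν)) : ℤ) : ZMod (p ^ γ)))⁻¹) = 1 :=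
      ZMod.mul_inv_of_unit _ hXYu
    have hXYinvu : IsUnit (((((r₁ + (b : ℤ) * (p : ℤ) ^ (γ - 2 * ν)) : ℤ) : ZMod (p ^ γ))
        * (((r₂ + (b : ℤ) * (p : ℤ) ^ (γ - 2 * ν)) : ℤ) : ZMod (p ^ γ)))⁻¹) :=
      IsUnit.of_mul_eq_one _ (ZMod.inv_mul_of_unit _ hXYu)
    have hcbu : IsUnit ((d : ZMod (p ^ γ))
        * (((((r₁ + (b : ℤ) * (p : ℤ) ^ (γ - 2 * ν)) : ℤ) : ZMod (p ^ γ))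
          * (((r₂ + (b : ℤ) * (p : ℤ) ^ (γ - 2 * ν)) : ℤ) : ZMod (p ^ γ)))⁻¹)) :=
      hdu.mul hXYinvu
    have HQP2 : ((p : ZMod (p ^ γ))) ^ (2 * ν - 1 - k) * ((p : ZMod (p ^ γ))) ^ (γ - 2 * ν)
        * ((p : ZMod (p ^ γ))) ^ (γ - 1) = 0 := by
      rw [← pow_add, ← pow_add]
      exact Stmt5Aux.pow_cast_eq_zero p γ (by omega)
    have hstep : ∀ t : ℕ,
        (starRingEnd ℂ) (χ (((r₁ + ((b + p ^ (2 * ν - 1 - k) * t : ℕ) : ℤ) * (p : ℤ) ^ (γ - 2 * ν)) : ℤ) : ZMod (p ^ γ)))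
          * χ (((r₂ + ((b + p ^ (2 * ν - 1 - k) * t : ℕ) : ℤ) * (p : ℤ) ^ (γ - 2 * ν)) : ℤ) : ZMod (p ^ γ))
        = ((starRingEnd ℂ) (χ (((r₁ + (b : ℤ) * (p : ℤ) ^ (γ - 2 * ν)) : ℤ) : ZMod (p ^ γ)))
            * χ (((r₂ + (b : ℤ) * (p : ℤ) ^ (γ - 2 * ν)) : ℤ) : ZMod (p ^ γ)))
          * Stmt5Aux.psi p γ χ ((t : ZMod (p ^ γ)) * ((d : ZMod (p ^ γ))
            * (((((r₁ + (b : ℤ) * (p : ℤ) ^ (γ - 2 * ν)) : ℤ) : ZMod (p ^ γ))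
              * (((r₂ + (b : ℤ) * (p : ℤ) ^ (γ - 2 * ν)) : ℤ) : ZMod (p ^ γ)))⁻¹))) := by
      intro t
      have hsplit4 : (p : ℤ) ^ (γ - 1)
          = (p : ℤ) ^ (2 * ν - 1 - k) * (p : ℤ) ^ (γ - 2 * ν) * (p : ℤ) ^ k := by
        rw [← pow_add, ← pow_add]; congr 1; omega
      have HzZ : (r₂ + ((b + p ^ (2 * ν - 1 - k) * t : ℕ) : ℤ) * (p : ℤ) ^ (γ - 2 * ν))
            * (r₁ + (b : ℤ) * (p : ℤ) ^ (γ - 2 * ν))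
          = (r₁ + ((b + p ^ (2 * ν - 1 - k) * t : ℕ) : ℤ) * (p : ℤ) ^ (γ - 2 * ν))
            * (r₂ + (b : ℤ) * (p : ℤ) ^ (γ - 2 * ν))
            + (t : ℤ) * d * (p : ℤ) ^ (γ - 1) := by
        push_cast
        linear_combination ((t : ℤ) * (p : ℤ) ^ (2 * ν - 1 - k) * (p : ℤ) ^ (γ - 2 * ν)) * hd
          - ((t : ℤ) * d) * hsplit4
      have hidZ : (((r₂ + ((b + p ^ (2 * ν - 1 - k) * t : ℕ) : ℤ) * (p : ℤ) ^ (γ - 2 * ν)) : ℤ) : ZMod (p ^ γ))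
            * (((r₁ + (b : ℤ) * (p : ℤ) ^ (γ - 2 * ν)) : ℤ) : ZMod (p ^ γ))
          = (((r₁ + ((b + p ^ (2 * ν - 1 - k) * t : ℕ) : ℤ) * (p : ℤ) ^ (γ - 2 * ν)) : ℤ) : ZMod (p ^ γ))
            * ((((r₂ + (b : ℤ) * (p : ℤ) ^ (γ - 2 * ν)) : ℤ) : ZMod (p ^ γ))
              * (1 + ((t : ZMod (p ^ γ)) * ((d : ZMod (p ^ γ))
                  * (((((r₁ + (b : ℤ) * (p : ℤ) ^ (γ - 2 * ν)) : ℤ) : ZMod (p ^ γ))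
                    * (((r₂ + (b : ℤ) * (p : ℤ) ^ (γ - 2 * ν)) : ℤ) : ZMod (p ^ γ)))⁻¹)))
                * ((p : ZMod (p ^ γ))) ^ (γ - 1))) := by
        have HzC2 := congrArg (fun z : ℤ => ((z : ZMod (p ^ γ)))) HzZ
        push_cast at HzC2 hXYinv ⊢
        linear_combination HzC2
          - ((t : ZMod (p ^ γ)) * (d : ZMod (p ^ γ)) * ((p : ZMod (p ^ γ))) ^ (γ - 1)) * hXYinv
          - ((t : ZMod (p ^ γ)) * (t : ZMod (p ^ γ)) * (d : ZMod (p ^ γ))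
              * ((r₂ : ZMod (p ^ γ)) + (b : ZMod (p ^ γ)) * ((p : ZMod (p ^ γ))) ^ (γ - 2 * ν))
              * (((((r₁ : ZMod (p ^ γ)) + (b : ZMod (p ^ γ)) * ((p : ZMod (p ^ γ))) ^ (γ - 2 * ν)))
                * (((r₂ : ZMod (p ^ γ)) + (b : ZMod (p ^ γ)) * ((p : ZMod (p ^ γ))) ^ (γ - 2 * ν))))⁻¹))
            * HQP2
      have E3 := congrArg χ hidZ
      rw [map_mul, map_mul, map_mul] at E3
      have e1 := Stmt5Aux.conj_mul_self χ (hUnit r₁ hr₁ (b + p ^ (2 * ν - 1 - k) * t))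
      have e2 := Stmt5Aux.conj_mul_self χ (hUnit r₁ hr₁ b)
      unfold Stmt5Aux.psi
      set cA := (starRingEnd ℂ) (χ (((r₁ + ((b + p ^ (2 * ν - 1 - k) * t : ℕ) : ℤ) * (p : ℤ) ^ (γ - 2 * ν)) : ℤ) : ZMod (p ^ γ))) with hcA
      set cB := (starRingEnd ℂ) (χ (((r₁ + (b : ℤ) * (p : ℤ) ^ (γ - 2 * ν)) : ℤ) : ZMod (p ^ γ))) with hcB
      set yA := χ (((r₂ + ((b + p ^ (2 * ν - 1 - k) * t : ℕ) : ℤ) * (p : ℤ) ^ (γ - 2 * ν)) : ℤ) : ZMod (p ^ γ)) with hyA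
      set yB := χ (((r₂ + (b : ℤ) * (p : ℤ) ^ (γ - 2 * ν)) : ℤ) : ZMod (p ^ γ)) with hyB
      set xA := χ (((r₁ + ((b + p ^ (2 * ν - 1 - k) * t : ℕ) : ℤ) * (p : ℤ) ^ (γ - 2 * ν)) : ℤ) : ZMod (p ^ γ)) with hxA
      set xB := χ (((r₁ + (b : ℤ) * (p : ℤ) ^ (γ - 2 * ν)) : ℤ) : ZMod (p ^ γ)) with hxB
      set ps := χ (1 + ((t : ZMod (p ^ γ)) * ((d : ZMod (p ^ γ))
          * (((((r₁ + (b : ℤ) * (p : ℤ) ^ (γ - 2 * ν)) : ℤ) : ZMod (p ^ γ))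
            * (((r₂ + (b : ℤ) * (p : ℤ) ^ (γ - 2 * ν)) : ℤ) : ZMod (p ^ γ)))⁻¹)))
        * ((p : ZMod (p ^ γ))) ^ (γ - 1)) with hps
      -- E3 : yA * xB = xA * (yB * ps) ; e1 : cA * xA = 1 ; e2 : cB * xB = 1
      linear_combination (-(cA * yA)) * e2 + (cA * cB) * E3 + (cB * yB * ps) * e1
    rw [Finset.sum_congr rfl (fun t _ => hstep t), ← Finset.mul_sum,
      Stmt5Aux.psi_geom_sum hp (by omega) χ hχ hcbu (by omega), mul_zero]
  · -- case p^(2ν) ∣ r₁ - r₂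
    intro hdvd
    obtain ⟨e, he⟩ := hdvd
    have hsplit : ((p : ℤ)) ^ γ = (p : ℤ) ^ (γ - 2 * ν) * (p : ℤ) ^ (2 * ν) := by
      rw [← pow_add]; congr 1; omega
    have hterm : ∀ a ∈ (Finset.range (p ^ (2 * ν))).filter (fun a => ¬ p ∣ a),
        (starRingEnd ℂ) (χ (((r₁ + (a : ℤ) * (p : ℤ) ^ (γ - 2 * ν)) : ℤ) : ZMod (p ^ γ)))
          * χ (((r₂ + (a : ℤ) * (p : ℤ) ^ (γ - 2 * ν)) : ℤ) : ZMod (p ^ γ)) = T := by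
      intro a _
      have Hz : (((r₁ + (a : ℤ) * (p : ℤ) ^ (γ - 2 * ν)) * r₂ : ℤ) : ZMod (p ^ γ))
          = (((r₂ + (a : ℤ) * (p : ℤ) ^ (γ - 2 * ν)) * r₁ : ℤ) : ZMod (p ^ γ)) := by
        apply Stmt5Aux.intCast_eq_of_dvd
        refine ⟨-((a : ℤ) * e), ?_⟩
        rw [hsplit]
        linear_combination (-(a : ℤ) * (p : ℤ) ^ (γ - 2 * ν)) * he
      have h1 : ((r₁ : ZMod (p ^ γ))) * ((r₁ : ZMod (p ^ γ)))⁻¹ = 1 := ZMod.mul_inv_of_unit _ hr₁u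
      have hid : (((r₁ + (a : ℤ) * (p : ℤ) ^ (γ - 2 * ν)) : ℤ) : ZMod (p ^ γ))
          * (((r₁ : ZMod (p ^ γ)))⁻¹ * (r₂ : ZMod (p ^ γ)))
          = (((r₂ + (a : ℤ) * (p : ℤ) ^ (γ - 2 * ν)) : ℤ) : ZMod (p ^ γ)) := by
        push_cast at Hz ⊢
        linear_combination ((r₁ : ZMod (p ^ γ)))⁻¹ * Hz
          + (((r₂ : ℤ) : ZMod (p ^ γ)) + ((a : ℕ) : ZMod (p ^ γ)) * ((p : ZMod (p ^ γ))) ^ (γ - 2 * ν)) * h1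
      rw [← hid, map_mul, ← mul_assoc, Stmt5Aux.conj_mul_self χ (hUnit r₁ hr₁ a), one_mul, hTdef]
    rw [hE, Finset.sum_congr rfl hterm, Finset.sum_const, nsmul_eq_mul]
    have hcard : ((((Finset.range (p ^ (2 * ν))).filter (fun a => ¬ p ∣ a)).card : ℕ) : ℂ)
        = (p : ℂ) ^ (2 * ν - 1) * ((p : ℂ) - 1) := by
      have h1 : ((((Finset.range (p ^ (2 * ν))).filter (fun a => ¬ p ∣ a)).card : ℕ) : ℂ)
          = ∑ a ∈ (Finset.range (p ^ (2 * ν))).filter (fun a => ¬ p ∣ a), (1 : ℂ) := by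
        simp
      rw [h1, ← hexp, Stmt5Aux.reindex hp le_rfl (fun _ => (1 : ℂ)), pow_one,
        Stmt5Aux.filter_range_p hp]
      simp only [Finset.sum_const, nsmul_eq_mul, mul_one, Finset.card_range,
        Finset.card_erase_of_mem (Finset.mem_range.mpr hp.pos)]
      push_cast [Nat.cast_sub hp.one_le]
      ring
    rw [hcard]
    ring
  · -- case p^(2ν-1) ∣ r₁ - r₂ but not p^(2ν)
    intro hdvd1 hdvd2
    obtain ⟨d, hd⟩ := hdvd1
    have hpZ : Prime ((p : ℤ)) := Nat.prime_iff_prime_int.mp hp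
    have hpd : ¬ (p : ℤ) ∣ d := by
      rintro ⟨c, hc⟩
      apply hdvd2
      refine ⟨c, ?_⟩
      have hpow : (p : ℤ) ^ (2 * ν) = (p : ℤ) ^ (2 * ν - 1) * (p : ℤ) := by
        conv_lhs => rw [show (2 * ν) = (2 * ν - 1) + 1 from by omega]
        rw [pow_succ]
      rw [hd, hc, hpow]
      ring
    have hdu : IsUnit ((d : ZMod (p ^ γ))) :=
      Stmt5Aux.isUnit_intCast hp ((hpZ.coprime_iff_not_dvd.mpr hpd).symm)
    have hRRu : IsUnit (((r₁ : ZMod (p ^ γ))) * ((r₂ : ZMod (p ^ γ)))) := hr₁u.mul hr₂u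
    have hRRinv : (((r₁ : ZMod (p ^ γ))) * (r₂ : ZMod (p ^ γ)))
        * ((((r₁ : ZMod (p ^ γ))) * (r₂ : ZMod (p ^ γ)))⁻¹) = 1 := ZMod.mul_inv_of_unit _ hRRu
    have hRRinvu : IsUnit ((((r₁ : ZMod (p ^ γ))) * (r₂ : ZMod (p ^ γ)))⁻¹) :=
      IsUnit.of_mul_eq_one _ (ZMod.inv_mul_of_unit _ hRRu)
    have hc0u : IsUnit ((d : ZMod (p ^ γ)) * ((((r₁ : ZMod (p ^ γ))) * (r₂ : ZMod (p ^ γ)))⁻¹)) :=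
      hdu.mul hRRinvu
    have hsplitg1 : (p : ℤ) ^ (γ - 1) = (p : ℤ) ^ (γ - 2 * ν) * (p : ℤ) ^ (2 * ν - 1) := by
      rw [← pow_add]; congr 1; omega
    have HQP : ((p : ZMod (p ^ γ))) ^ (γ - 2 * ν) * ((p : ZMod (p ^ γ))) ^ (γ - 1) = 0 := by
      rw [← pow_add]; exact Stmt5Aux.pow_cast_eq_zero p γ (by omega)
    -- step: translating a ↦ a + p*t does not change the term
    have hstep : ∀ b t : ℕ,
        (starRingEnd ℂ) (χ (((r₁ + ((b + p * t : ℕ) : ℤ) * (p : ℤ) ^ (γ - 2 * ν)) : ℤ) : ZMod (p ^ γ)))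
          * χ (((r₂ + ((b + p * t : ℕ) : ℤ) * (p : ℤ) ^ (γ - 2 * ν)) : ℤ) : ZMod (p ^ γ))
        = (starRingEnd ℂ) (χ (((r₁ + (b : ℤ) * (p : ℤ) ^ (γ - 2 * ν)) : ℤ) : ZMod (p ^ γ)))
          * χ (((r₂ + (b : ℤ) * (p : ℤ) ^ (γ - 2 * ν)) : ℤ) : ZMod (p ^ γ)) := by
      intro b t
      have hs : (p : ℤ) ^ γ = (p : ℤ) ^ 1 * (p : ℤ) ^ (γ - 2 * ν) * (p : ℤ) ^ (2 * ν - 1) := by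
        rw [← pow_add, ← pow_add]; congr 1; omega
      have HzZ : ((r₂ + ((b + p * t : ℕ) : ℤ) * (p : ℤ) ^ (γ - 2 * ν))
            * (r₁ + (b : ℤ) * (p : ℤ) ^ (γ - 2 * ν)))
          - ((r₁ + ((b + p * t : ℕ) : ℤ) * (p : ℤ) ^ (γ - 2 * ν))
            * (r₂ + (b : ℤ) * (p : ℤ) ^ (γ - 2 * ν)))
          = (p : ℤ) ^ γ * ((t : ℤ) * d) := by
        push_cast
        linear_combination ((t : ℤ) * (p : ℤ) * (p : ℤ) ^ (γ - 2 * ν)) * hd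
          + (-(t : ℤ) * d) * hs
      have HzC := Stmt5Aux.intCast_eq_of_dvd (p := p) (γ := γ) ⟨(t : ℤ) * d, HzZ⟩
      rw [Int.cast_mul, Int.cast_mul] at HzC
      have E3 := congrArg χ HzC
      rw [map_mul, map_mul] at E3
      have e1 := Stmt5Aux.conj_mul_self χ (hUnit r₁ hr₁ (b + p * t))
      have e2 := Stmt5Aux.conj_mul_self χ (hUnit r₁ hr₁ b)
      set cA := (starRingEnd ℂ) (χ (((r₁ + ((b + p * t : ℕ) : ℤ) * (p : ℤ) ^ (γ - 2 * ν)) : ℤ) : ZMod (p ^ γ))) with hcA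
      set cB := (starRingEnd ℂ) (χ (((r₁ + (b : ℤ) * (p : ℤ) ^ (γ - 2 * ν)) : ℤ) : ZMod (p ^ γ))) with hcB
      set yA := χ (((r₂ + ((b + p * t : ℕ) : ℤ) * (p : ℤ) ^ (γ - 2 * ν)) : ℤ) : ZMod (p ^ γ)) with hyA
      set yB := χ (((r₂ + (b : ℤ) * (p : ℤ) ^ (γ - 2 * ν)) : ℤ) : ZMod (p ^ γ)) with hyB
      set xA := χ (((r₁ + ((b + p * t : ℕ) : ℤ) * (p : ℤ) ^ (γ - 2 * ν)) : ℤ) : ZMod (p ^ γ)) with hxA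
      set xB := χ (((r₁ + (b : ℤ) * (p : ℤ) ^ (γ - 2 * ν)) : ℤ) : ZMod (p ^ γ)) with hxB
      -- HzC : yA * xB = xA * yB ; e1 : cA * xA = 1 ; e2 : cB * xB = 1
      linear_combination (-(cA * yA)) * e2 + (cA * cB) * E3 + (cB * yB) * e1
    -- the value at b
    have houter : ∀ b : ℕ,
        (starRingEnd ℂ) (χ (((r₁ + (b : ℤ) * (p : ℤ) ^ (γ - 2 * ν)) : ℤ) : ZMod (p ^ γ)))
          * χ (((r₂ + (b : ℤ) * (p : ℤ) ^ (γ - 2 * ν)) : ℤ) : ZMod (p ^ γ))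
        = T * Stmt5Aux.psi p γ χ ((b : ZMod (p ^ γ))
            * ((d : ZMod (p ^ γ)) * ((((r₁ : ZMod (p ^ γ))) * (r₂ : ZMod (p ^ γ)))⁻¹))) := by
      intro b
      have HzZ2 : (r₂ + (b : ℤ) * (p : ℤ) ^ (γ - 2 * ν)) * r₁
          = (r₁ + (b : ℤ) * (p : ℤ) ^ (γ - 2 * ν)) * r₂ + (b : ℤ) * d * (p : ℤ) ^ (γ - 1) := by
        linear_combination ((b : ℤ) * (p : ℤ) ^ (γ - 2 * ν)) * hd - ((b : ℤ) * d) * hsplitg1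
      have hidZ : (((r₂ + (b : ℤ) * (p : ℤ) ^ (γ - 2 * ν)) : ℤ) : ZMod (p ^ γ)) * ((r₁ : ZMod (p ^ γ)))
          = (((r₁ + (b : ℤ) * (p : ℤ) ^ (γ - 2 * ν)) : ℤ) : ZMod (p ^ γ))
            * (((r₂ : ZMod (p ^ γ)))
              * (1 + ((b : ZMod (p ^ γ))
                  * ((d : ZMod (p ^ γ)) * ((((r₁ : ZMod (p ^ γ))) * (r₂ : ZMod (p ^ γ)))⁻¹)))
                * ((p : ZMod (p ^ γ))) ^ (γ - 1))) := by
        have HzC2 := congrArg (fun z : ℤ => ((z : ZMod (p ^ γ)))) HzZ2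
        push_cast at HzC2 ⊢
        linear_combination HzC2
          - ((b : ZMod (p ^ γ)) * (d : ZMod (p ^ γ)) * ((p : ZMod (p ^ γ))) ^ (γ - 1)) * hRRinv
          - ((b : ZMod (p ^ γ)) * (b : ZMod (p ^ γ)) * (d : ZMod (p ^ γ)) * (r₂ : ZMod (p ^ γ))
              * ((((r₁ : ZMod (p ^ γ))) * (r₂ : ZMod (p ^ γ)))⁻¹)) * HQP
      have E32 := congrArg χ hidZ
      rw [map_mul, map_mul, map_mul] at E32
      have e2 := Stmt5Aux.conj_mul_self χ (hUnit r₁ hr₁ b)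
      unfold Stmt5Aux.psi
      apply mul_left_cancel₀ hχr₁
      set cB := (starRingEnd ℂ) (χ (((r₁ + (b : ℤ) * (p : ℤ) ^ (γ - 2 * ν)) : ℤ) : ZMod (p ^ γ))) with hcB
      set yB := χ (((r₂ + (b : ℤ) * (p : ℤ) ^ (γ - 2 * ν)) : ℤ) : ZMod (p ^ γ)) with hyB
      set xB := χ (((r₁ + (b : ℤ) * (p : ℤ) ^ (γ - 2 * ν)) : ℤ) : ZMod (p ^ γ)) with hxB
      set ps := χ (1 + ((b : ZMod (p ^ γ))
          * ((d : ZMod (p ^ γ)) * ((((r₁ : ZMod (p ^ γ))) * (r₂ : ZMod (p ^ γ)))⁻¹)))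
        * ((p : ZMod (p ^ γ))) ^ (γ - 1)) with hps
      -- E32 : yB * χ r₁ = xB * (χ r₂ * ps)
      linear_combination cB * E32 + (χ ((r₂ : ZMod (p ^ γ))) * ps) * e2 - ps * hT
    -- assemble
    rw [hE, ← hexp, Stmt5Aux.reindex hp le_rfl, pow_one]
    have h1 : ∀ b ∈ (Finset.range p).filter (fun b => ¬ p ∣ b),
        (∑ t ∈ Finset.range (p ^ (2 * ν - 1)),
          ((starRingEnd ℂ) (χ (((r₁ + ((b + p * t : ℕ) : ℤ) * (p : ℤ) ^ (γ - 2 * ν)) : ℤ) : ZMod (p ^ γ)))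
            * χ (((r₂ + ((b + p * t : ℕ) : ℤ) * (p : ℤ) ^ (γ - 2 * ν)) : ℤ) : ZMod (p ^ γ))))
        = (((p ^ (2 * ν - 1) : ℕ) : ℂ) * T) * Stmt5Aux.psi p γ χ ((b : ZMod (p ^ γ))
            * ((d : ZMod (p ^ γ)) * ((((r₁ : ZMod (p ^ γ))) * (r₂ : ZMod (p ^ γ)))⁻¹))) := by
      intro b _
      rw [Finset.sum_congr rfl (fun t _ => hstep b t), Finset.sum_const, Finset.card_range,
        houter b, nsmul_eq_mul]
      ring
    rw [Finset.sum_congr rfl h1, ← Finset.mul_sum,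
      Stmt5Aux.psi_erase_sum hp (by omega) χ hχ hc0u]
    push_cast
    ring
end

section
/- Let p be a prime, γ, ν integers with 1 ≤ ν ≤ γ/3, and let r be an integer coprime to p and a₀, a₁ integers with gcd(a₀, p) = 1. Then, modulo p^γ, the inverse of (r + a₀·p^{γ−2ν} + a₁·p^{γ−ν}) is congruent to (\overline{r + a₀p^{γ−2ν}})²·(r + a₀p^{γ−2ν} − a₁p^{γ−ν}), where \overline{x} denotes the inverse of x modulo p^γ. -/
lemma aux_isUnit {n : ℕ} {x : ℤ} (h : IsCoprime x (n : ℤ)) :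
    IsUnit ((x : ZMod n)) := by
  obtain ⟨u, v, huv⟩ := h
  refine IsUnit.of_mul_eq_one (u : ZMod n) ?_
  have : ((u * x + v * n : ℤ) : ZMod n) = ((1 : ℤ) : ZMod n) := by rw [huv]
  push_cast at this
  simpa [ZMod.natCast_self, mul_comm] using this

theorem stmt11 (p γ ν : ℕ) (hp : p.Prime) (hν1 : 1 ≤ ν) (hν2 : 3 * ν ≤ γ)
    (r a₀ a₁ : ℤ) (hr : IsCoprime r (p : ℤ)) (ha₀ : IsCoprime a₀ (p : ℤ)) :
    (((r + a₀ * (p : ℤ) ^ (γ - 2 * ν) + a₁ * (p : ℤ) ^ (γ - ν) : ℤ) : ZMod (p ^ γ)))⁻¹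
      = ((((r + a₀ * (p : ℤ) ^ (γ - 2 * ν) : ℤ) : ZMod (p ^ γ)))⁻¹) ^ 2
          * (((r + a₀ * (p : ℤ) ^ (γ - 2 * ν) - a₁ * (p : ℤ) ^ (γ - ν) : ℤ) : ZMod (p ^ γ))) := by
  set x : ℤ := r + a₀ * (p : ℤ) ^ (γ - 2 * ν) with hx
  set y : ℤ := a₁ * (p : ℤ) ^ (γ - ν) with hy
  have h1 : 1 ≤ γ - 2 * ν := by omega
  have h2 : 1 ≤ γ - ν := by omega
  -- coprimality of x and x+y with p
  have hxcop : IsCoprime x (p : ℤ) := by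
    rw [hx]
    obtain ⟨k, hk⟩ : ∃ k, γ - 2 * ν = k + 1 := ⟨γ - 2 * ν - 1, by omega⟩
    rw [hk, pow_succ]
    have := hr.add_mul_right_left (a₀ * (p:ℤ)^k)
    convert this using 2
    · rfl
    ring
  have hxycop : IsCoprime (x + y) (p : ℤ) := by
    rw [hy]
    obtain ⟨k, hk⟩ : ∃ k, γ - ν = k + 1 := ⟨γ - ν - 1, by omega⟩
    rw [hk, pow_succ]
    have := hxcop.add_mul_right_left (a₁ * (p:ℤ)^k)
    convert this using 2
    · rfl
    ring
  have hxu : IsUnit ((x : ZMod (p ^ γ))) := by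
    apply aux_isUnit
    have := hxcop.pow_right (n := γ)
    simpa using this
  have hxyu : IsUnit (((x + y : ℤ) : ZMod (p ^ γ))) := by
    apply aux_isUnit
    have := hxycop.pow_right (n := γ)
    simpa using this
  -- key congruence: (x - y) * (x + y) ≡ x^2 mod p^γ
  have hdvd : ((p : ℤ) ^ γ) ∣ y ^ 2 := by
    rw [hy, mul_pow, ← pow_mul]
    exact Dvd.dvd.mul_left (pow_dvd_pow (p:ℤ) (by omega)) _
  have hkey : (((x - y) * (x + y) : ℤ) : ZMod (p ^ γ)) = ((x ^ 2 : ℤ) : ZMod (p ^ γ)) := by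
    have : (((x - y) * (x + y) : ℤ) : ZMod (p ^ γ)) - ((x ^ 2 : ℤ) : ZMod (p ^ γ)) = 0 := by
      rw [← Int.cast_sub, ZMod.intCast_zmod_eq_zero_iff_dvd]
      have : (x - y) * (x + y) - x ^ 2 = -(y ^ 2) := by ring
      rw [this]
      push_cast
      exact hdvd.neg_right
    linear_combination this
  -- finish
  have hgoal : (((x + y : ℤ) : ZMod (p ^ γ)))⁻¹
      = (((x : ℤ) : ZMod (p ^ γ))⁻¹) ^ 2 * (((x - y : ℤ) : ZMod (p ^ γ))) := by
    have hinv : ((x : ZMod (p ^ γ))⁻¹) ^ 2 * ((x ^ 2 : ℤ) : ZMod (p ^ γ)) = 1 := by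
      push_cast
      rw [sq, sq]
      calc (x : ZMod (p^γ))⁻¹ * (x : ZMod (p^γ))⁻¹ * ((x : ZMod (p^γ)) * (x : ZMod (p^γ)))
          = ((x : ZMod (p^γ))⁻¹ * (x : ZMod (p^γ))) * ((x : ZMod (p^γ))⁻¹ * (x : ZMod (p^γ))) := by ring
        _ = 1 := by rw [ZMod.inv_mul_of_unit _ hxu, one_mul]
    have := ZMod.inv_mul_of_unit _ hxyu
    apply hxyu.mul_left_cancel
    rw [ZMod.mul_inv_of_unit _ hxyu]; symm
    calc (((x + y : ℤ) : ZMod (p ^ γ))) * ((((x : ℤ) : ZMod (p ^ γ))⁻¹) ^ 2 * (((x - y : ℤ) : ZMod (p ^ γ))))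
        = (((x : ℤ) : ZMod (p ^ γ))⁻¹) ^ 2 * (((x - y) * (x + y) : ℤ) : ZMod (p ^ γ)) := by
          push_cast; ring
      _ = 1 := by rw [hkey, hinv]
  have e1 : r + a₀ * (p : ℤ) ^ (γ - 2 * ν) + a₁ * (p : ℤ) ^ (γ - ν) = x + y := by rw [hx, hy]
  have e2 : r + a₀ * (p : ℤ) ^ (γ - 2 * ν) - a₁ * (p : ℤ) ^ (γ - ν) = x - y := by rw [hx, hy]
  rw [e1, e2, hgoal, hx]
end

section
/- Let p be a prime, ν ≥ 1, δ ≥ 1 integers, and a₀, a₁ integers with gcd(a₀, p) = 1 and gcd(1 + a₀p^δ, p) = 1. Set a = a₀ + a₁p^ν and let \bar{a} denote the inverse of a modulo p^{2ν}. Then \overline{\bar{a} + p^δ} ≡ \overline{\bar{a₀} + p^δ} + (\overline{1 + a₀p^δ})²·a₁·p^ν (mod p^{2ν}), where all inverses are taken modulo p^{2ν}. -/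
lemma zmod_inv_eq' {n : ℕ} {x y : ZMod n} (hx : IsUnit x) (h : x * y = 1) : x⁻¹ = y := by
  calc x⁻¹ = x⁻¹ * (x * y) := by rw [h, mul_one]
  _ = y := by rw [← mul_assoc, ZMod.inv_mul_of_unit x hx, one_mul]

lemma zmod_unit_of_coprime' {p m : ℕ} (x : ℤ) (h : IsCoprime x (p : ℤ)) :
    IsUnit ((x : ℤ) : ZMod (p ^ m)) := by
  obtain ⟨u, v, huv⟩ := (h.pow_right : IsCoprime x ((p:ℤ)^m))
  apply IsUnit.of_mul_eq_one ((u : ℤ) : ZMod (p ^ m))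
  have h0 : ((p : ZMod (p ^ m)))^m = 0 := by
    have := ZMod.natCast_self (p ^ m)
    push_cast at this
    exact this
  have := congrArg (fun z : ℤ => (z : ZMod (p ^ m))) huv
  push_cast at this
  rw [h0] at this
  linear_combination this

theorem stmt12 (p ν δ : ℕ) (hp : p.Prime) (hν : 1 ≤ ν) (hδ : 1 ≤ δ)
    (a₀ a₁ : ℤ) (ha₀ : IsCoprime a₀ (p : ℤ))
    (hu : IsCoprime (1 + a₀ * (p : ℤ) ^ δ) (p : ℤ))
    (a : ℤ) (ha : a = a₀ + a₁ * (p : ℤ) ^ ν) :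
    (((a : ZMod (p ^ (2 * ν))))⁻¹ + (p : ZMod (p ^ (2 * ν))) ^ δ)⁻¹
      = (((a₀ : ZMod (p ^ (2 * ν))))⁻¹ + (p : ZMod (p ^ (2 * ν))) ^ δ)⁻¹
        + ((((1 + a₀ * (p : ℤ) ^ δ : ℤ) : ZMod (p ^ (2 * ν))))⁻¹) ^ 2
            * (a₁ : ZMod (p ^ (2 * ν))) * (p : ZMod (p ^ (2 * ν))) ^ ν := by
  set N := p ^ (2 * ν) with hN
  set P : ZMod N := (p : ZMod N) with hP
  set A₀ : ZMod N := (a₀ : ZMod N) with hA₀def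
  set A : ZMod N := (a : ZMod N) with hAdef
  -- basic zero fact
  have h0 : P ^ (2 * ν) = 0 := by
    have := ZMod.natCast_self (p ^ (2 * ν))
    push_cast at this
    exact this
  -- coprimality facts in ℤ
  obtain ⟨ν', rfl⟩ : ∃ ν', ν = ν' + 1 := ⟨ν - 1, by omega⟩
  obtain ⟨δ', rfl⟩ : ∃ δ', δ = δ' + 1 := ⟨δ - 1, by omega⟩
  have hca : IsCoprime a (p : ℤ) := by
    rw [ha, pow_succ, ← mul_assoc]
    exact ha₀.add_mul_right_left _
  have hcu' : IsCoprime (1 + a * (p : ℤ) ^ (δ' + 1)) (p : ℤ) := by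
    rw [pow_succ, ← mul_assoc]
    exact isCoprime_one_left.add_mul_right_left _
  -- units in ZMod N
  have hUA₀ : IsUnit A₀ := zmod_unit_of_coprime' a₀ ha₀
  have hUA : IsUnit A := zmod_unit_of_coprime' a hca
  have hUu : IsUnit (((1 + a₀ * (p : ℤ) ^ (δ' + 1) : ℤ) : ZMod N)) :=
    zmod_unit_of_coprime' _ hu
  have hUu' : IsUnit (((1 + a * (p : ℤ) ^ (δ' + 1) : ℤ) : ZMod N)) :=
    zmod_unit_of_coprime' _ hcu'
  set U : ZMod N := ((1 + a₀ * (p : ℤ) ^ (δ' + 1) : ℤ) : ZMod N) with hUdef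
  set V : ZMod N := U⁻¹ with hVdef
  have hUV : U * V = 1 := ZMod.mul_inv_of_unit U hUu
  have hUcast : U = 1 + A₀ * P ^ (δ' + 1) := by
    rw [hUdef, hA₀def, hP]
    push_cast
    ring
  have hAcast : A = A₀ + (a₁ : ZMod N) * P ^ (ν' + 1) := by
    rw [hAdef, ha, hA₀def, hP]
    push_cast
    ring
  have hU'cast : ((1 + a * (p : ℤ) ^ (δ' + 1) : ℤ) : ZMod N) = 1 + A * P ^ (δ' + 1) := by
    rw [hAdef, hP]
    push_cast
    ring
  have hUV' : IsUnit (1 + A * P ^ (δ' + 1)) := hU'cast ▸ hUu'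
  -- compute first inverse
  have key1 : (A⁻¹ + P ^ (δ' + 1))⁻¹
      = A₀ * V + V ^ 2 * (a₁ : ZMod N) * P ^ (ν' + 1) := by
    apply zmod_inv_eq'
    · have : A⁻¹ + P ^ (δ' + 1) = A⁻¹ * (1 + A * P ^ (δ' + 1)) := by
        rw [mul_add, mul_one, ← mul_assoc, ZMod.inv_mul_of_unit A hUA, one_mul]
      rw [this]
      exact (IsUnit.of_mul_eq_one _ (ZMod.inv_mul_of_unit A hUA)).mul hUV'
    · apply hUA.mul_left_cancel
      rw [mul_one]
      have hAA : A * A⁻¹ = 1 := ZMod.mul_inv_of_unit A hUA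
      rw [hUcast] at hUV
      rw [hAcast] at hAA ⊢
      linear_combination (A₀ * V + V ^ 2 * (a₁ : ZMod N) * P ^ (ν' + 1)) * hAA + (A₀ + (a₁ : ZMod N) * P ^ (ν' + 1) * V + (a₁ : ZMod N) * P ^ (ν' + 1)) * hUV +
        ((a₁ : ZMod N) ^ 2 * P ^ (δ' + 1) * V ^ 2) * h0
  have key2 : (A₀⁻¹ + P ^ (δ' + 1))⁻¹ = A₀ * V := by
    apply zmod_inv_eq'
    · have : A₀⁻¹ + P ^ (δ' + 1) = A₀⁻¹ * (1 + A₀ * P ^ (δ' + 1)) := by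
        rw [mul_add, mul_one, ← mul_assoc, ZMod.inv_mul_of_unit A₀ hUA₀, one_mul]
      rw [this, ← hUcast]
      exact (IsUnit.of_mul_eq_one _ (ZMod.inv_mul_of_unit A₀ hUA₀)).mul hUu
    · apply hUA₀.mul_left_cancel
      rw [mul_one]
      have hAA : A₀ * A₀⁻¹ = 1 := ZMod.mul_inv_of_unit A₀ hUA₀
      rw [hUcast] at hUV
      linear_combination A₀ * V * hAA + A₀ * hUV
  rw [key1, key2]
end
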